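/- Subject expansion: if M →_β M' and Γ ⊢ M' : A in the intersection type system induced by any intersection type theory 𝒯, then Γ ⊢ M : A. -/
import Mathlib


/-- Pure λ-terms with variables named by natural numbers. -/
inductive Tm : Type
  | var : ℕ → Tm
  | lam : ℕ → Tm → Tm
  | app : Tm → Tm → Tm
deriving DecidableEq

namespace Tm

/-- Free variables of a term. -/
def fv : Tm → Finset ℕ
  | var x => {x}
  | lam x t => fv t \ {x}
  | app t u => fv t ∪ fv u

/-- A variable fresh for a given finite set of variables. -/
def fresh (s : Finset ℕ) : ℕ := (s.sup id) + 1

/-- Capture-avoiding simultaneous substitution. -/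
def subst (σ : ℕ → Tm) : Tm → Tm
  | var x => σ x
  | app t u => app (subst σ t) (subst σ u)
  | lam x t =>
      let y := fresh ((fv t \ {x}).biUnion fun z => fv (σ z))
      lam y (subst (fun z => if z = x then var y else σ z) t)

/-- `M[x := N]`. -/
def subst1 (x : ℕ) (N M : Tm) : Tm :=
  subst (fun z => if z = x then N else var z) M

/-- `λx₁…xₙ. t`. -/
def lams (xs : List ℕ) (t : Tm) : Tm := xs.foldr lam t

/-- `t M₁ ⋯ Mₘ`. -/
def apps (t : Tm) (ts : List Tm) : Tm := ts.foldl app t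

/-- One-step β-reduction: contextual closure of the β-rule. -/
inductive Step : Tm → Tm → Prop
  | beta (x : ℕ) (M N : Tm) : Step (app (lam x M) N) (subst1 x N M)
  | appL {M M' : Tm} (N : Tm) : Step M M' → Step (app M N) (app M' N)
  | appR (M : Tm) {N N' : Tm} : Step N N' → Step (app M N) (app M N')
  | abs (x : ℕ) {M M' : Tm} : Step M M' → Step (lam x M) (lam x M')

/-- β-reduction: reflexive-transitive closure of one-step β-reduction. -/
def Red : Tm → Tm → Prop := Relation.ReflTransGen Step

/-- β-convertibility: the equivalence relation generated by β-reduction. -/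
def Conv : Tm → Tm → Prop := Relation.EqvGen Step

/-- `M` is solvable if `(λx⃗.M) N₁ ⋯ Nₙ` β-reduces to the identity,
where `x⃗` covers the free variables of `M`. -/
def Solvable (M : Tm) : Prop :=
  ∃ (xs : List ℕ) (Ns : List Tm) (y : ℕ),
    M.fv ⊆ xs.toFinset ∧ Red (apps (lams xs M) Ns) (lam y (var y))

/-- One-step head reduction: contraction of the head redex. -/
inductive HeadStep : Tm → Tm → Prop
  | beta (x : ℕ) (M N : Tm) (Ms : List Tm) :
      HeadStep (apps (app (lam x M) N) Ms) (apps (subst1 x N M) Ms)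
  | abs (x : ℕ) {M M' : Tm} : HeadStep M M' → HeadStep (lam x M) (lam x M')

end Tm

/-- Intersection types over a set `A` of constants, with top `𝖴`. -/
inductive Ty (A : Type) : Type
  | const : A → Ty A
  | top : Ty A
  | arrow : Ty A → Ty A → Ty A
  | inter : Ty A → Ty A → Ty A
deriving DecidableEq

/-- An intersection type theory: a subtyping relation on `Ty A` closed under
(Refl), (IncL), (IncR), (𝖴top), (Glb), (Trans) and (→∼). -/
structure ITT (A : Type) where
  le : Ty A → Ty A → Prop
  le_refl : ∀ a, le a a
  le_incL : ∀ a b, le (Ty.inter b a) b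
  le_incR : ∀ a b, le (Ty.inter b a) a
  le_top : ∀ a, le a Ty.top
  le_glb : ∀ {a b c}, le c a → le c b → le c (Ty.inter a b)
  le_trans : ∀ {a b c}, le a b → le b c → le a c
  arrow_cong : ∀ {a a' b b'}, le a a' → le a' a → le b b' → le b' b →
      le (Ty.arrow a b) (Ty.arrow a' b')

variable {A : Type}

/-- The equivalence `∼` induced by the subtyping. -/
def ITT.eqv (T : ITT A) (a b : Ty A) : Prop := T.le a b ∧ T.le b a

/-- Bases: (partial) mappings from term variables to types. -/
def Ctx (A : Type) := ℕ → Option (Ty A)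

def Ctx.empty : Ctx A := fun _ => none

/-- `Γ, x:a`. -/
def Ctx.update (Γ : Ctx A) (x : ℕ) (a : Ty A) : Ctx A :=
  fun y => if y = x then some a else Γ y

/-- The intersection type assignment system induced by an itt `T`:
rules (Ax), (𝖴), (→I), (→E), (∩I) and (≤). -/
inductive Der (T : ITT A) : Ctx A → Tm → Ty A → Prop
  | ax {Γ : Ctx A} {x a} : Γ x = some a → Der T Γ (Tm.var x) a
  | top {Γ M} : Der T Γ M Ty.top
  | arrI {Γ : Ctx A} {x M a b} :
      Der T (Γ.update x b) M a → Der T Γ (Tm.lam x M) (Ty.arrow b a)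
  | arrE {Γ M N a b} :
      Der T Γ M (Ty.arrow b a) → Der T Γ N b → Der T Γ (Tm.app M N) a
  | interI {Γ M a b} : Der T Γ M a → Der T Γ M b → Der T Γ M (Ty.inter a b)
  | sub {Γ M a b} : Der T Γ M a → T.le a b → Der T Γ M b

/-- Finite intersection `⋂_{i∈I} Aᵢ`, with `⋂_∅ = 𝖴`. -/
def interList : List (Ty A) → Ty A
  | [] => Ty.top
  | a :: l => Ty.inter a (interList l)

namespace SubjExp

variable {A : Type} {T : ITT A}

lemma fresh_not_mem (s : Finset ℕ) : Tm.fresh s ∉ s := by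
  intro h
  have := Finset.le_sup (f := id) h
  simp only [id] at this
  simp only [Tm.fresh] at this
  omega

/-- Context order: every binding of `Γ` is matched in `Γ'` by a smaller one,
or is top-like. -/
def CtxLE (T : ITT A) (Γ' Γ : Ctx A) : Prop :=
  ∀ x b, Γ x = some b → T.le Ty.top b ∨ ∃ b', Γ' x = some b' ∧ T.le b' b

lemma CtxLE.update {Γ' Γ : Ctx A} (h : CtxLE T Γ' Γ) (x : ℕ) (b : Ty A) :
    CtxLE T (Γ'.update x b) (Γ.update x b) := by
  intro y c hc
  by_cases hy : y = x
  · subst hy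
    simp only [Ctx.update, if_pos rfl] at hc ⊢
    cases hc
    exact Or.inr ⟨_, rfl, T.le_refl _⟩
  · simp only [Ctx.update, if_neg hy] at hc ⊢
    exact h y c hc

lemma der_mono {Γ Γ' : Ctx A} {M a} (h : Der T Γ M a) (hle : CtxLE T Γ' Γ) :
    Der T Γ' M a := by
  induction h generalizing Γ' with
  | ax hx =>
      rcases hle _ _ hx with h | ⟨b', hb', hle'⟩
      · exact Der.sub Der.top h
      · exact Der.sub (Der.ax hb') hle'
  | top => exact Der.top
  | arrI _ ih => exact Der.arrI (ih (hle.update _ _))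
  | arrE _ _ ih1 ih2 => exact Der.arrE (ih1 hle) (ih2 hle)
  | interI _ _ ih1 ih2 => exact Der.interI (ih1 hle) (ih2 hle)
  | sub _ hle' ih => exact Der.sub (ih hle) hle'

lemma der_fv {Γ Γ' : Ctx A} {M a} (h : Der T Γ M a)
    (hag : ∀ x ∈ M.fv, Γ x = Γ' x) : Der T Γ' M a := by
  induction h generalizing Γ' with
  | @ax Γ x a hx =>
      exact Der.ax ((hag x (by simp [Tm.fv])) ▸ hx)
  | top => exact Der.top
  | @arrI Γ x M a b _ ih =>
      apply Der.arrI
      apply ih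
      intro z hz
      by_cases hzx : z = x
      · subst hzx; simp [Ctx.update]
      · simp only [Ctx.update, if_neg hzx]
        exact hag z (by simp [Tm.fv, hz, hzx])
  | @arrE Γ M N a b _ _ ih1 ih2 =>
      exact Der.arrE (ih1 fun z hz => hag z (by simp [Tm.fv, hz]))
        (ih2 fun z hz => hag z (by simp [Tm.fv, hz]))
  | interI _ _ ih1 ih2 => exact Der.interI (ih1 hag) (ih2 hag)
  | sub _ hle ih => exact Der.sub (ih hag) hle

lemma gen_var_aux {Γ : Ctx A} {P : Tm} {a} (h : Der T Γ P a) :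
    ∀ x, P = Tm.var x → T.le Ty.top a ∨ ∃ a', Γ x = some a' ∧ T.le a' a := by
  induction h with
  | @ax Γ x a hx =>
      intro y hy
      cases hy
      exact Or.inr ⟨a, hx, T.le_refl a⟩
  | top => exact fun _ _ => Or.inl (T.le_top _)
  | arrI _ _ => intro y hy; simp at hy
  | arrE _ _ _ _ => intro y hy; simp at hy
  | @interI Γ M a b _ _ ih1 ih2 =>
      intro y hy
      rcases ih1 y hy with h1 | ⟨a', ha', l1⟩
      · rcases ih2 y hy with h2 | ⟨a', ha', l2⟩
        · exact Or.inl (T.le_glb h1 h2)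
        · exact Or.inr ⟨a', ha', T.le_glb (T.le_trans (T.le_top a') h1) l2⟩
      · rcases ih2 y hy with h2 | ⟨a'', ha'', l2⟩
        · exact Or.inr ⟨a', ha', T.le_glb l1 (T.le_trans (T.le_top a') h2)⟩
        · rw [ha'] at ha''
          cases ha''
          exact Or.inr ⟨a', ha', T.le_glb l1 l2⟩
  | sub _ hle ih =>
      intro y hy
      rcases ih y hy with h1 | ⟨a', ha', l1⟩
      · exact Or.inl (T.le_trans h1 hle)
      · exact Or.inr ⟨a', ha', T.le_trans l1 hle⟩

lemma gen_var {Γ : Ctx A} {x a} (h : Der T Γ (Tm.var x) a) :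
    T.le Ty.top a ∨ ∃ a', Γ x = some a' ∧ T.le a' a :=
  gen_var_aux h x rfl

lemma interList_append_le_left (l₁ l₂ : List (Ty A)) :
    T.le (interList (l₁ ++ l₂)) (interList l₁) := by
  induction l₁ with
  | nil => exact T.le_top _
  | cons a l₁ ih =>
      exact T.le_glb (T.le_incL _ _) (T.le_trans (T.le_incR _ _) ih)

lemma interList_append_le_right (l₁ l₂ : List (Ty A)) :
    T.le (interList (l₁ ++ l₂)) (interList l₂) := by
  induction l₁ with
  | nil => exact T.le_refl _
  | cons a l₁ ih => exact T.le_trans (T.le_incR _ _) ih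

lemma gen_lam_aux {Γ : Ctx A} {P a} (h : Der T Γ P a) :
    ∀ x M, P = Tm.lam x M →
      ∃ l : List (Ty A × Ty A),
        (∀ p ∈ l, Der T (Γ.update x p.1) M p.2) ∧
        T.le (interList (l.map fun p => Ty.arrow p.1 p.2)) a := by
  induction h with
  | ax _ => intro x M hM; simp at hM
  | top =>
      intro x M hM
      exact ⟨[], by simp, T.le_top _⟩
  | @arrI Γ x₀ M₀ a b hd _ =>
      intro x M hM
      injection hM with h1 h2
      subst h1; subst h2
      exact ⟨[(b, a)], by simpa using hd, T.le_incL _ _⟩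
  | arrE _ _ _ _ => intro x M hM; simp at hM
  | interI _ _ ih1 ih2 =>
      intro x M hM
      obtain ⟨l₁, hd1, hl1⟩ := ih1 x M hM
      obtain ⟨l₂, hd2, hl2⟩ := ih2 x M hM
      refine ⟨l₁ ++ l₂, ?_, ?_⟩
      · intro p hp
        rcases List.mem_append.1 hp with hp | hp
        · exact hd1 p hp
        · exact hd2 p hp
      · rw [List.map_append]
        exact T.le_glb (T.le_trans (interList_append_le_left _ _) hl1)
          (T.le_trans (interList_append_le_right _ _) hl2)
  | sub _ hle ih =>
      intro x M hM
      obtain ⟨l, hd, hl⟩ := ih x M hM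
      exact ⟨l, hd, T.le_trans hl hle⟩

lemma gen_app_aux {Γ : Ctx A} {P a} (h : Der T Γ P a) :
    ∀ M N, P = Tm.app M N →
      ∃ l : List (Ty A × Ty A),
        (∀ p ∈ l, Der T Γ M (Ty.arrow p.1 p.2) ∧ Der T Γ N p.1) ∧
        T.le (interList (l.map Prod.snd)) a := by
  induction h with
  | ax _ => intro M N hM; simp at hM
  | top => intro M N hM; exact ⟨[], by simp, T.le_top _⟩
  | arrI _ _ => intro M N hM; simp at hM
  | @arrE Γ M₀ N₀ a b h1 h2 _ _ =>
      intro M N hM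
      injection hM with e1 e2
      subst e1; subst e2
      exact ⟨[(b, a)], by simp [h1, h2], T.le_incL _ _⟩
  | interI _ _ ih1 ih2 =>
      intro M N hM
      obtain ⟨l₁, hd1, hl1⟩ := ih1 M N hM
      obtain ⟨l₂, hd2, hl2⟩ := ih2 M N hM
      refine ⟨l₁ ++ l₂, ?_, ?_⟩
      · intro p hp
        rcases List.mem_append.1 hp with hp | hp
        · exact hd1 p hp
        · exact hd2 p hp
      · rw [List.map_append]
        exact T.le_glb (T.le_trans (interList_append_le_left _ _) hl1)
          (T.le_trans (interList_append_le_right _ _) hl2)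
  | sub _ hle ih =>
      intro M N hM
      obtain ⟨l, hd, hl⟩ := ih M N hM
      exact ⟨l, hd, T.le_trans hl hle⟩

/-- Pointwise intersection of two contexts. -/
def merge (Δ₁ Δ₂ : Ctx A) : Ctx A := fun z =>
  match Δ₁ z, Δ₂ z with
  | some a, some b => some (Ty.inter a b)
  | some a, none => some a
  | none, o => o

lemma merge_le_left (Δ₁ Δ₂ : Ctx A) : CtxLE T (merge Δ₁ Δ₂) Δ₁ := by
  intro z b hb
  right
  cases h2 : Δ₂ z with
  | none => exact ⟨b, by simp [merge, hb, h2], T.le_refl b⟩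
  | some c => exact ⟨Ty.inter b c, by simp [merge, hb, h2], T.le_incL _ _⟩

lemma merge_le_right (Δ₁ Δ₂ : Ctx A) : CtxLE T (merge Δ₁ Δ₂) Δ₂ := by
  intro z b hb
  right
  cases h1 : Δ₁ z with
  | none => exact ⟨b, by simp [merge, hb, h1], T.le_refl b⟩
  | some c => exact ⟨Ty.inter c b, by simp [merge, hb, h1], T.le_incR _ _⟩

lemma merge_der {Δ₁ Δ₂ : Ctx A} {Γ : Ctx A} {σ : ℕ → Tm}
    (h1 : ∀ x b, Δ₁ x = some b → Der T Γ (σ x) b)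
    (h2 : ∀ x b, Δ₂ x = some b → Der T Γ (σ x) b) :
    ∀ x b, merge Δ₁ Δ₂ x = some b → Der T Γ (σ x) b := by
  intro x b hb
  cases e1 : Δ₁ x with
  | none =>
      cases e2 : Δ₂ x with
      | none => simp [merge, e1, e2] at hb
      | some c =>
          simp only [merge, e1, e2] at hb
          cases hb
          exact h2 x _ e2
  | some c =>
      cases e2 : Δ₂ x with
      | none =>
          simp only [merge, e1, e2] at hb
          cases hb
          exact h1 x _ e1
      | some d =>
          simp only [merge, e1, e2] at hb
          cases hb
          exact Der.interI (h1 x _ e1) (h2 x _ e2)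

lemma merge_support {Δ₁ Δ₂ : Ctx A} {x : ℕ}
    (h1 : Δ₁ x = none) (h2 : Δ₂ x = none) : merge Δ₁ Δ₂ x = none := by
  simp [merge, h1, h2]

/-- Combining finitely many contexts, each typing `M` with some type. -/
lemma combine {α : Type} (S : Finset ℕ) (σ : ℕ → Tm) (Γ : Ctx A) (M : Tm)
    (g : α → Ty A) (l : List α)
    (h : ∀ p ∈ l, ∃ Δ : Ctx A, (∀ x, x ∉ S → Δ x = none) ∧
      (∀ x b, Δ x = some b → Der T Γ (σ x) b) ∧ Der T Δ M (g p)) :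
    ∃ Δ : Ctx A, (∀ x, x ∉ S → Δ x = none) ∧
      (∀ x b, Δ x = some b → Der T Γ (σ x) b) ∧
      ∀ p ∈ l, Der T Δ M (g p) := by
  induction l with
  | nil =>
      exact ⟨Ctx.empty, fun _ _ => rfl,
        fun x b hb => by simp [Ctx.empty] at hb, fun p hp => by simp at hp⟩
  | cons p l ih =>
      obtain ⟨Δ₁, s1, d1, t1⟩ := h p (by simp)
      obtain ⟨Δ₂, s2, d2, t2⟩ := ih fun q hq => h q (by simp [hq])
      refine ⟨merge Δ₁ Δ₂, fun x hx => merge_support (s1 x hx) (s2 x hx),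
        merge_der d1 d2, ?_⟩
      intro q hq
      rcases List.mem_cons.1 hq with hq | hq
      · subst hq; exact der_mono t1 (merge_le_left _ _)
      · exact der_mono (t2 q hq) (merge_le_right _ _)

lemma der_interList {Δ : Ctx A} {M : Tm} {α : Type} (g : α → Ty A)
    (l : List α) (h : ∀ p ∈ l, Der T Δ M (g p)) :
    Der T Δ M (interList (l.map g)) := by
  induction l with
  | nil => exact Der.top
  | cons p l ih =>
      exact Der.interI (h p (by simp)) (ih fun q hq => h q (by simp [hq]))

/-- Inverse substitution lemma. -/
lemma inv_subst (M : Tm) : ∀ (σ : ℕ → Tm) (Γ : Ctx A) (a : Ty A),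
    Der T Γ (Tm.subst σ M) a →
    ∃ Δ : Ctx A, (∀ x, x ∉ M.fv → Δ x = none) ∧
      (∀ x b, Δ x = some b → Der T Γ (σ x) b) ∧ Der T Δ M a := by
  induction M with
  | var y =>
      intro σ Γ a h
      simp only [Tm.subst] at h
      refine ⟨fun z => if z = y then some a else none, ?_, ?_, ?_⟩
      · intro z hz
        simp only [Tm.fv, Finset.mem_singleton] at hz
        simp [hz]
      · intro z b hb
        by_cases hzy : z = y
        · subst hzy
          simp only [if_pos rfl] at hb
          cases hb
          exact h
        · simp [hzy] at hb
      · exact Der.ax (by simp)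
  | app P Q ihP ihQ =>
      intro σ Γ a h
      simp only [Tm.subst] at h
      obtain ⟨l, hl, hle⟩ := gen_app_aux h _ _ rfl
      have hcomb : ∀ p ∈ l, ∃ Δ : Ctx A, (∀ x, x ∉ (Tm.app P Q).fv → Δ x = none) ∧
          (∀ x b, Δ x = some b → Der T Γ (σ x) b) ∧
          Der T Δ (Tm.app P Q) (Prod.snd p) := by
        intro p hp
        obtain ⟨Δ₁, s1, d1, t1⟩ := ihP σ Γ (Ty.arrow p.1 p.2) (hl p hp).1
        obtain ⟨Δ₂, s2, d2, t2⟩ := ihQ σ Γ p.1 (hl p hp).2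
        refine ⟨merge Δ₁ Δ₂, ?_, merge_der d1 d2, ?_⟩
        · intro x hx
          simp only [Tm.fv, Finset.mem_union] at hx
          push_neg at hx
          exact merge_support (s1 x hx.1) (s2 x hx.2)
        · exact Der.arrE (der_mono t1 (merge_le_left _ _))
            (der_mono t2 (merge_le_right _ _))
      obtain ⟨Δ, hs, hd, ht⟩ := combine (Tm.app P Q).fv σ Γ (Tm.app P Q)
        Prod.snd l hcomb
      exact ⟨Δ, hs, hd, Der.sub (der_interList Prod.snd l ht) hle⟩
  | lam x t iht =>
      intro σ Γ a h
      simp only [Tm.subst] at h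
      set y := Tm.fresh ((t.fv \ {x}).biUnion fun z => Tm.fv (σ z)) with hy
      set σ' : ℕ → Tm := fun z => if z = x then Tm.var y else σ z with hσ'
      obtain ⟨l, hl, hle⟩ := gen_lam_aux h _ _ rfl
      have hcomb : ∀ p ∈ l, ∃ Δ : Ctx A, (∀ w, w ∉ (Tm.lam x t).fv → Δ w = none) ∧
          (∀ w b, Δ w = some b → Der T Γ (σ w) b) ∧
          Der T Δ (Tm.lam x t) (Ty.arrow p.1 p.2) := by
        intro p hp
        obtain ⟨Δₚ, sp, dp, tp⟩ := iht σ' (Γ.update y p.1) p.2 (hl p hp)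
        set E : Ctx A := fun z => if z = x then none else Δₚ z with hE
        have hEt : Der T (E.update x p.1) t p.2 := by
          refine der_mono tp ?_
          intro z c hc
          by_cases hzx : z = x
          · subst hzx
            have := dp z c hc
            simp only [hσ', if_pos rfl] at this
            rcases gen_var this with htop | ⟨c', hc', hlec⟩
            · exact Or.inl htop
            · simp only [Ctx.update, if_pos rfl] at hc'
              cases hc'
              exact Or.inr ⟨p.1, by simp [Ctx.update], hlec⟩
          · exact Or.inr ⟨c, by simp [Ctx.update, hE, hzx, hc], T.le_refl c⟩
        refine ⟨E, ?_, ?_, Der.arrI hEt⟩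
        · intro z hz
          simp only [Tm.fv, Finset.mem_sdiff, Finset.mem_singleton] at hz
          push_neg at hz
          by_cases hzx : z = x
          · simp [hE, hzx]
          · simp only [hE, if_neg hzx]
            exact sp z (fun hzt => hzx (hz hzt))
        · intro z c hc
          simp only [hE] at hc
          by_cases hzx : z = x
          · simp [hzx] at hc
          · rw [if_neg hzx] at hc
            have hzt : z ∈ t.fv := by
              by_contra hzt
              rw [sp z hzt] at hc
              cases hc
            have := dp z c hc
            simp only [hσ', if_neg hzx] at this
            refine der_fv this ?_
            intro w hw
            have hwy : w ≠ y := by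
              intro hwy
              subst hwy
              apply fresh_not_mem ((t.fv \ {x}).biUnion fun z => Tm.fv (σ z))
              rw [← hy]
              exact Finset.mem_biUnion.2 ⟨z, by simp [hzt, hzx], hw⟩
            simp [Ctx.update, hwy]
      obtain ⟨Δ, hs, hd, ht⟩ := combine (Tm.lam x t).fv σ Γ (Tm.lam x t)
        (fun p => Ty.arrow p.1 p.2) l hcomb
      exact ⟨Δ, hs, hd, Der.sub (der_interList _ l ht) hle⟩

lemma beta_expand {Γ : Ctx A} {x : ℕ} {N M : Tm} {a : Ty A}
    (h : Der T Γ (Tm.subst1 x N M) a) :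
    Der T Γ (Tm.app (Tm.lam x M) N) a := by
  obtain ⟨Δ, hsupp, hσ, hder⟩ := inv_subst M _ Γ a h
  have key : ∀ b : Ty A, (∀ z c, Δ z = some c → z ≠ x →
      Der T Γ (Tm.var z) c) → (Δ x = none ∨ ∃ c, Δ x = some c ∧ T.le b c) →
      CtxLE T (Γ.update x b) Δ := by
    intro b hvar hx z c hc
    by_cases hzx : z = x
    · subst hzx
      rcases hx with hx | ⟨c', hc', hbc⟩
      · rw [hx] at hc; cases hc
      · rw [hc'] at hc; cases hc
        exact Or.inr ⟨b, by simp [Ctx.update], hbc⟩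
    · rcases gen_var (hvar z c hc hzx) with htop | ⟨c', hc', hlec⟩
      · exact Or.inl htop
      · exact Or.inr ⟨c', by simp [Ctx.update, hzx, hc'], hlec⟩
  have hvar : ∀ z c, Δ z = some c → z ≠ x → Der T Γ (Tm.var z) c := by
    intro z c hc hzx
    have := hσ z c hc
    simpa [hzx] using this
  cases hx : Δ x with
  | none =>
      have h1 : Der T (Γ.update x Ty.top) M a :=
        der_mono hder (key Ty.top hvar (Or.inl hx))
      exact Der.arrE (Der.arrI h1) Der.top
  | some b =>
      have h1 : Der T (Γ.update x b) M a :=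
        der_mono hder (key b hvar (Or.inr ⟨b, hx, T.le_refl b⟩))
      have h2 : Der T Γ N b := by
        have := hσ x b hx
        simpa using this
      exact Der.arrE (Der.arrI h1) h2

lemma der_app_congL {M M' N : Tm}
    (hM : ∀ (Γ : Ctx A) (a : Ty A), Der T Γ M' a → Der T Γ M a)
    {Γ : Ctx A} {a : Ty A} (h : Der T Γ (Tm.app M' N) a) :
    Der T Γ (Tm.app M N) a := by
  obtain ⟨l, hl, hle⟩ := gen_app_aux h _ _ rfl
  refine Der.sub (der_interList Prod.snd l ?_) hle
  intro p hp
  exact Der.arrE (hM _ _ (hl p hp).1) (hl p hp).2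

lemma der_app_congR {M N N' : Tm}
    (hN : ∀ (Γ : Ctx A) (a : Ty A), Der T Γ N' a → Der T Γ N a)
    {Γ : Ctx A} {a : Ty A} (h : Der T Γ (Tm.app M N') a) :
    Der T Γ (Tm.app M N) a := by
  obtain ⟨l, hl, hle⟩ := gen_app_aux h _ _ rfl
  refine Der.sub (der_interList Prod.snd l ?_) hle
  intro p hp
  exact Der.arrE (hl p hp).1 (hN _ _ (hl p hp).2)

lemma der_lam_cong {x : ℕ} {M M' : Tm}
    (hM : ∀ (Γ : Ctx A) (a : Ty A), Der T Γ M' a → Der T Γ M a)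
    {Γ : Ctx A} {a : Ty A} (h : Der T Γ (Tm.lam x M') a) :
    Der T Γ (Tm.lam x M) a := by
  obtain ⟨l, hl, hle⟩ := gen_lam_aux h _ _ rfl
  refine Der.sub (der_interList (fun p => Ty.arrow p.1 p.2) l ?_) hle
  intro p hp
  exact Der.arrI (hM _ _ (hl p hp))

end SubjExp

/-- Subject expansion: if `M →β M'` and `Γ ⊢ M' : A` in the
system induced by any intersection type theory `𝒯`, then `Γ ⊢ M : A`. -/
theorem subject_expansion {A : Type} (T : ITT A) (Γ : Ctx A) (M M' : Tm)
    (a : Ty A) (hstep : Tm.Step M M') (h : Der T Γ M' a) :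
    Der T Γ M a := by
  revert h
  induction hstep generalizing Γ a with
  | beta x M N => exact fun h => SubjExp.beta_expand h
  | appL N _ ih => exact fun h => SubjExp.der_app_congL (fun Γ a => ih Γ a) h
  | appR M _ ih => exact fun h => SubjExp.der_app_congR (fun Γ a => ih Γ a) h
  | abs x _ ih => exact fun h => SubjExp.der_lam_cong (fun Γ a => ih Γ a) h
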